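/- Let 0 < λ < 4, λ = 2 − 2cos θ with θ ∈ (0,π), and let q₁ : ℕ → ℝ. Then the function x(n) defined recursively by x(n) = sin(nθ) + (1/sin θ)·Σ_{s=1}^{n} q₁(s) x(s) sin((n−s)θ) satisfies the difference equation −Δ²x(n−1) + q₁(n)x(n) = λx(n) for all n ≥ 1, together with x(0) = 0. -/

import Mathlib

/-! The sum is a discrete Duhamel formula: `n ↦ sin (n θ)` solves the free recurrence
`y (n + 2) - 2 cos θ y (n + 1) + y n = 0`, and each summand `c s sin ((n - s) θ)` is such a
solution that starts at `n = s` with value `0`, so applying the recurrence operator to the sum leaves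
only the newly started term `c (n + 1) sin θ`. Dividing by `sin θ ≠ 0` gives the equation. -/

open Finset Real

theorem sin_add_add_sin_sub (t θ : ℝ) : sin (t + θ) + sin (t - θ) = 2 * cos θ * sin t := by
  rw [sin_add, sin_sub]
  ring

theorem sin_nat_mul_recurrence (θ : ℝ) (m : ℕ) :
    sin (((m + 2 : ℕ) : ℝ) * θ) - 2 * cos θ * sin (((m + 1 : ℕ) : ℝ) * θ) + sin ((m : ℝ) * θ)
      = 0 := by
  have h := sin_add_add_sin_sub (((m : ℝ) + 1) * θ) θ
  push_cast
  ring_nf at h ⊢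
  linear_combination h

noncomputable def sinDuhamel (θ : ℝ) (c : ℕ → ℝ) (n : ℕ) : ℝ :=
  ∑ s ∈ Icc 1 n, c s * sin (((n : ℝ) - s) * θ)

theorem sinDuhamel_recurrence (θ : ℝ) (c : ℕ → ℝ) (m : ℕ) :
    sinDuhamel θ c (m + 2) - 2 * cos θ * sinDuhamel θ c (m + 1) + sinDuhamel θ c m
      = c (m + 1) * sin θ := by
  have hpair : ∑ s ∈ Icc 1 m, c s * sin (((m : ℝ) + 2 - s) * θ)
      + ∑ s ∈ Icc 1 m, c s * sin (((m : ℝ) - s) * θ)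
      = 2 * cos θ * ∑ s ∈ Icc 1 m, c s * sin (((m : ℝ) + 1 - s) * θ) := by
    rw [mul_sum, ← sum_add_distrib]
    refine sum_congr rfl fun s _ => ?_
    have hfree := sin_add_add_sin_sub (((m : ℝ) + 1 - s) * θ) θ
    ring_nf at hfree ⊢
    linear_combination c s * hfree
  have hlast : sin ((((m + 2 : ℕ) : ℝ) - ((m + 1 : ℕ) : ℝ)) * θ) = sin θ := by
    push_cast
    ring_nf
  simp only [sinDuhamel, sum_Icc_succ_top (by omega : 1 ≤ m + 1),
    sum_Icc_succ_top (by omega : 1 ≤ m + 2), sub_self, zero_mul, sin_zero, mul_zero, add_zero]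
  rw [hlast]
  push_cast
  linear_combination hpair

theorem sum_representation_solves_general (θ lam : ℝ) (h0 : 0 < θ) (hπ : θ < Real.pi)
    (hlam : lam = 2 - 2 * Real.cos θ)
    (q₁ : ℕ → ℝ) (x : ℕ → ℝ)
    (hx : ∀ n : ℕ, x n = Real.sin ((n : ℝ) * θ) +
      (1 / Real.sin θ) * ∑ s ∈ Finset.Icc 1 n, q₁ s * x s * Real.sin (((n : ℝ) - (s : ℝ)) * θ)) :
    x 0 = 0 ∧ ∀ n : ℕ, 1 ≤ n →
      -(x (n + 1) - 2 * x n + x (n - 1)) + q₁ n * x n = lam * x n := by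
  have hsin : sin θ ≠ 0 := (sin_pos_of_pos_of_lt_pi h0 hπ).ne'
  refine ⟨by simpa using hx 0, fun n hn => ?_⟩
  obtain ⟨m, rfl⟩ := Nat.exists_eq_add_of_le' hn
  have hduhamel := sinDuhamel_recurrence θ (fun s => q₁ s * x s) m
  have hxS : ∀ n : ℕ, sin θ * x n
      = sin θ * sin ((n : ℝ) * θ) + sinDuhamel θ (fun s => q₁ s * x s) n := fun n => by
    rw [hx n, sinDuhamel]
    field_simp
  rw [show m + 1 + 1 = m + 2 from rfl, Nat.add_sub_cancel]
  refine mul_left_cancel₀ hsin ?_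
  linear_combination -hxS (m + 2) + 2 * cos θ * hxS (m + 1) - hxS m - hduhamel
    - sin θ * sin_nat_mul_recurrence θ m - sin θ * x (m + 1) * hlam

/-- The sum representation `x n = sin(nθ) + (1/sinθ) Σ_{s=1}^{n} q₁(s) x(s) sin((n-s)θ)`
satisfies `-Δ²x(n-1) + q₁(n) x(n) = λ x(n)` for `n ≥ 1` and `x 0 = 0`. -/
theorem sum_representation_solves (θ lam : ℝ) (h0 : 0 < θ) (hπ : θ < Real.pi)
    (hl0 : 0 < lam) (hl4 : lam < 4) (hlam : lam = 2 - 2 * Real.cos θ)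
    (q₁ : ℕ → ℝ) (x : ℕ → ℝ)
    (hx : ∀ n : ℕ, x n = Real.sin ((n : ℝ) * θ) +
      (1 / Real.sin θ) * ∑ s ∈ Finset.Icc 1 n, q₁ s * x s * Real.sin (((n : ℝ) - (s : ℝ)) * θ)) :
    x 0 = 0 ∧ ∀ n : ℕ, 1 ≤ n →
      -(x (n + 1) - 2 * x n + x (n - 1)) + q₁ n * x n = lam * x n :=
  sum_representation_solves_general θ lam h0 hπ hlam q₁ x hx
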